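/- arXiv:1407.5316 — 6 statements merged into one kernel-verified Lean document; each statement's English description precedes it below -/
import Mathlib

section
/- Let k be a field and R = k[x,y,z]/(x^2 - yz). Let P = (x,y)R and m = (x,y,z)R. Then the image of y in R satisfies: there exists z ∉ P with z·y ∈ P^2 (so y ∈ P^(2)), but y ∉ m·P. -/
set_option synthInstance.maxHeartbeats 1000000
set_option maxHeartbeats 1000000

open MvPolynomial

lemma aux_mul_zero {k : Type*} [Field k] (u v : DualNumber k)
    (hu : u.fst = 0) (hv : v.fst = 0) : u * v = 0 := by
  ext
  · rw [TrivSqZeroExt.fst_mul, hu, zero_mul, TrivSqZeroExt.fst_zero]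
  · rw [TrivSqZeroExt.snd_mul, hu, hv, TrivSqZeroExt.snd_zero]
    simp

theorem stmt0 (k : Type*) [Field k]
    (I : Ideal (MvPolynomial (Fin 3) k)) (hI : I = Ideal.span {X 0 ^ 2 - X 1 * X 2})
    (x y z : MvPolynomial (Fin 3) k ⧸ I)
    (hx : x = Ideal.Quotient.mk I (X 0)) (hy : y = Ideal.Quotient.mk I (X 1))
    (hz : z = Ideal.Quotient.mk I (X 2))
    (P m : Ideal (MvPolynomial (Fin 3) k ⧸ I))
    (hP : P = Ideal.span {x, y}) (hm : m = Ideal.span {x, y, z}) :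
    (z ∉ P ∧ z * y ∈ P ^ 2) ∧ y ∉ m * P := by
  -- ring hom χ : R → k, evaluation at (0,0,1)
  have hxP : x ∈ P := by rw [hP]; exact Ideal.subset_span (by simp)
  have hyP : y ∈ P := by rw [hP]; exact Ideal.subset_span (by simp)
  set φ₁ : MvPolynomial (Fin 3) k →+* k :=
    (aeval (fun i : Fin 3 => if i = 2 then (1 : k) else 0)).toRingHom with hφ₁
  have hφ₁I : ∀ a ∈ I, φ₁ a = 0 := by
    intro a ha
    rw [hI, Ideal.mem_span_singleton] at ha
    obtain ⟨c, rfl⟩ := ha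
    simp [hφ₁]
  set χ : MvPolynomial (Fin 3) k ⧸ I →+* k := Ideal.Quotient.lift I φ₁ hφ₁I with hχ
  have hχx : χ x = 0 := by rw [hx, hχ, Ideal.Quotient.lift_mk]; simp [hφ₁]
  have hχy : χ y = 0 := by rw [hy, hχ, Ideal.Quotient.lift_mk]; simp [hφ₁]
  have hχz : χ z = 1 := by rw [hz, hχ, Ideal.Quotient.lift_mk]; simp [hφ₁]
  -- ring hom ψ : R → DualNumber k, evaluation at (0, ε, 0)
  set φ₂ : MvPolynomial (Fin 3) k →+* DualNumber k :=
    (aeval (fun i : Fin 3 => if i = 1 then (DualNumber.eps : DualNumber k) else 0)).toRingHom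
      with hφ₂
  have hφ₂I : ∀ a ∈ I, φ₂ a = 0 := by
    intro a ha
    rw [hI, Ideal.mem_span_singleton] at ha
    obtain ⟨c, rfl⟩ := ha
    simp [hφ₂]
  set ψ : MvPolynomial (Fin 3) k ⧸ I →+* DualNumber k := Ideal.Quotient.lift I φ₂ hφ₂I with hψ
  have hψx : ψ x = 0 := by rw [hx, hψ, Ideal.Quotient.lift_mk]; simp [hφ₂]
  have hψy : ψ y = DualNumber.eps := by rw [hy, hψ, Ideal.Quotient.lift_mk]; simp [hφ₂]
  have hψz : ψ z = 0 := by rw [hz, hψ, Ideal.Quotient.lift_mk]; simp [hφ₂]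
  refine ⟨⟨?_, ?_⟩, ?_⟩
  · -- z ∉ P
    intro hzP
    rw [hP] at hzP
    have : χ z = 0 := by
      have hle : Ideal.span {x, y} ≤ Ideal.comap χ ⊥ := by
        rw [Ideal.span_le]
        intro a ha
        simp only [Set.mem_insert_iff, Set.mem_singleton_iff] at ha
        rcases ha with rfl | rfl
        · simpa [Ideal.mem_comap] using hχx
        · simpa [Ideal.mem_comap] using hχy
      simpa [Ideal.mem_comap] using hle hzP
    rw [hχz] at this
    exact one_ne_zero this
  · -- z * y ∈ P ^ 2
    have hzy : z * y = x * x := by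
      rw [hx, hy, hz, ← map_mul, ← map_mul, Ideal.Quotient.eq, hI,
        Ideal.mem_span_singleton]
      exact ⟨-1, by ring⟩
    rw [hzy, pow_two]
    exact Ideal.mul_mem_mul hxP hxP
  · -- y ∉ m * P
    intro hyMP
    have hfst : ∀ a ∈ m, (ψ a).fst = 0 := by
      intro a ha
      have hle : m ≤ Ideal.comap ((TrivSqZeroExt.fstHom k k k).toRingHom.comp ψ) ⊥ := by
        rw [hm, Ideal.span_le]
        intro b hb
        simp only [Set.mem_insert_iff, Set.mem_singleton_iff] at hb
        rcases hb with rfl | rfl | rfl <;>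
          simp [Ideal.mem_comap, hψx, hψy, hψz]
      simpa [Ideal.mem_comap] using hle ha
    have hfstP : ∀ a ∈ P, (ψ a).fst = 0 := by
      intro a ha
      have hle : P ≤ Ideal.comap ((TrivSqZeroExt.fstHom k k k).toRingHom.comp ψ) ⊥ := by
        rw [hP, Ideal.span_le]
        intro b hb
        simp only [Set.mem_insert_iff, Set.mem_singleton_iff] at hb
        rcases hb with rfl | rfl <;>
          simp [Ideal.mem_comap, hψx, hψy]
      simpa [Ideal.mem_comap] using hle ha
    have hker : m * P ≤ Ideal.comap ψ ⊥ := by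
      apply Ideal.mul_le.mpr
      intro a ha b hb
      rw [Ideal.mem_comap, map_mul]
      simpa using aux_mul_zero (ψ a) (ψ b) (hfst a ha) (hfstP b hb)
    have : ψ y = 0 := by simpa [Ideal.mem_comap] using hker hyMP
    rw [hψy] at this
    have := congrArg TrivSqZeroExt.snd this
    simp at this
end

section
/- Let k be a field and n ≥ 3. If r, s are positive integers with gcd(r,s) = 1, then the ideal generated by x_1^r - x_2^s in the formal power series ring k[[x_1,...,x_n]] is a prime ideal. -/
/-!
The substitution `x_{i₀} ↦ x_{i₀}^s`, `x_{i₁} ↦ x_{i₀}^r` (fixing the other variables) is a ring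
map into a domain killing `p = x_{i₀}^r - x_{i₁}^s`, so it suffices that its kernel is `(p)`.
Dividing by `p`, any `f` is congruent modulo `p` to a series all of whose monomials have
`x_{i₀}`-exponent `< r`. On such exponents the induced exponent map
`d ↦ (s d_{i₀} + r d_{i₁}) e_{i₀} + d_{rest}` is injective because `gcd(r, s) = 1`, so such a
series in the kernel vanishes.
-/

open Finsupp Finset

theorem Nat.eq_and_eq_of_mul_add_mul_eq {r s a b a' b' : ℕ} (hrs : r.Coprime s)
    (ha : a < r) (ha' : a' < r) (h : s * a + r * b = s * a' + r * b') : a = a' ∧ b = b' := by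
  have hmod : a ≡ a' [MOD r] := by
    refine Nat.ModEq.cancel_left_of_coprime hrs ?_
    simpa [Nat.ModEq, Nat.add_mul_mod_self_left] using congrArg (· % r) h
  have haa' : a = a' := by
    rwa [Nat.ModEq, Nat.mod_eq_of_lt ha, Nat.mod_eq_of_lt ha'] at hmod
  subst haa'
  exact ⟨rfl, Nat.eq_of_mul_eq_mul_left (by omega) (Nat.add_left_cancel h)⟩

namespace MvPowerSeries

variable {σ τ R : Type*} [CommRing R]

theorem hasSubst_monomial_one {w : σ → τ →₀ ℕ} (hw : ∀ i, w i ≠ 0)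
    (hfin : ∀ e, {i | w i = e}.Finite) :
    HasSubst fun i => (monomial (w i) (1 : R) : MvPowerSeries τ R) where
  const_coeff i := by
    rw [← coeff_zero_eq_constantCoeff_apply, coeff_monomial_ne (hw i).symm]
    exact IsNilpotent.zero
  coeff_zero e := (hfin e).subset fun i hi => by
    by_contra h
    exact hi (coeff_monomial_ne (Ne.symm h) _)

theorem prod_monomial_one_pow (w : σ → τ →₀ ℕ) (d : σ →₀ ℕ) :
    (d.prod fun i n => (monomial (w i) (1 : R)) ^ n) =
      monomial (linearCombination ℕ w d) 1 := by
  simp only [Finsupp.prod, monomial_pow, one_pow, prod_monomial, prod_const_one,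
    linearCombination_apply, Finsupp.sum]

theorem coeff_subst_monomial_one {w : σ → τ →₀ ℕ}
    (hw : HasSubst fun i => (monomial (w i) (1 : R) : MvPowerSeries τ R))
    (f : MvPowerSeries σ R) (e : τ →₀ ℕ) :
    coeff e (subst (fun i => (monomial (w i) (1 : R) : MvPowerSeries τ R)) f) =
      ∑ᶠ (d) (_ : linearCombination ℕ w d = e), coeff d f := by
  classical
  rw [coeff_subst hw]
  refine finsum_congr fun d => ?_
  rw [prod_monomial_one_pow, coeff_monomial, finsum_eq_if]
  simp [eq_comm]

theorem exists_coeff_sub_X_pow_sub_X_pow_mul_eq_zero {i₀ i₁ : σ} (hne : i₀ ≠ i₁) (r : ℕ)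
    {s : ℕ} (hs : 0 < s) (f : MvPowerSeries σ R) :
    ∃ q : MvPowerSeries σ R, ∀ d, r ≤ d i₀ → coeff d (f - (X i₀ ^ r - X i₁ ^ s) * q) = 0 := by
  classical
  -- `q = ∑ⱼ x_{i₁}^{sj} ⌊f / x_{i₀}^{r(j+1)}⌋`, where `⌊g / m⌋` drops the monomials of `g` not
  -- divisible by `m`; multiplied by `p`, the sum telescopes.
  set F : (σ →₀ ℕ) → ℕ → R := fun d j => coeff (d + single i₀ (r * j) - single i₁ (s * j)) f
    with hF
  let q : MvPowerSeries σ R := fun d => ∑ j ∈ range (d i₁ / s + 1), F (d + single i₀ r) j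
  have hq : ∀ d, coeff d q = ∑ j ∈ range (d i₁ / s + 1), F (d + single i₀ r) j := fun _ => rfl
  refine ⟨q, fun d hd => ?_⟩
  have hF0 : F d 0 = coeff d f := by simp [hF]
  have hq₀ : coeff (d - single i₀ r) q = ∑ j ∈ range (d i₁ / s + 1), F d j := by
    rw [hq, tsub_add_cancel_of_le (single_le_iff.2 hd)]
    simp [hne.symm]
  have hq₁ (h : s ≤ d i₁) : coeff (d - single i₁ s) q = ∑ j ∈ range (d i₁ / s), F d (j + 1) := by
    rw [hq, tsub_apply, single_eq_same, ← Nat.div_eq_sub_div hs h]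
    refine sum_congr rfl fun j _ => congrArg (coeff · f) ?_
    ext i
    simp only [tsub_apply, Finsupp.add_apply, single_apply]
    split_ifs <;> grind
  rw [sub_mul, map_sub, map_sub, X_pow_eq, X_pow_eq, coeff_monomial_mul, coeff_monomial_mul,
    if_pos (single_le_iff.2 hd), hq₀]
  by_cases h : s ≤ d i₁
  · rw [if_pos (single_le_iff.2 h), hq₁ h, sum_range_succ', hF0]
    simp
  · rw [if_neg (by rwa [single_le_iff]), Nat.div_eq_of_lt (by omega), sum_range_one, hF0]
    simp

section Cusp

variable [DecidableEq σ] (i₀ i₁ : σ) (r s : ℕ)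

noncomputable def cuspExponent (i : σ) : σ →₀ ℕ :=
  if i = i₀ then single i₀ s else if i = i₁ then single i₀ r else single i 1

variable (R) in
noncomputable def cuspParam (i : σ) : MvPowerSeries σ R :=
  monomial (cuspExponent i₀ i₁ r s i) 1

variable {i₀ i₁ r s}

theorem linearCombination_cuspExponent_apply_left (hne : i₀ ≠ i₁) (d : σ →₀ ℕ) :
    linearCombination ℕ (cuspExponent i₀ i₁ r s) d i₀ = s * d i₀ + r * d i₁ := by
  induction d using Finsupp.induction_linear with
  | zero => simp
  | add d d' hd hd' => simp only [map_add, Finsupp.add_apply, hd, hd']; ring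
  | single j n =>
    by_cases h₀ : j = i₀
    · subst h₀; simp [cuspExponent, hne, mul_comm]
    by_cases h₁ : j = i₁
    · subst h₁; simp [cuspExponent, h₀, mul_comm]
    simp [cuspExponent, h₀, h₁, Ne.symm h₀, Ne.symm h₁]

theorem linearCombination_cuspExponent_apply_of_ne (d : σ →₀ ℕ) {i : σ} (h₀ : i ≠ i₀)
    (h₁ : i ≠ i₁) : linearCombination ℕ (cuspExponent i₀ i₁ r s) d i = d i := by
  induction d using Finsupp.induction_linear with
  | zero => simp
  | add d d' hd hd' => simp only [map_add, Finsupp.add_apply, hd, hd']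
  | single j n =>
    by_cases h₀' : j = i₀
    · subst h₀'; simp [cuspExponent, h₀]
    by_cases h₁' : j = i₁
    · subst h₁'; simp [cuspExponent, h₀', Ne.symm h₀, Ne.symm h₁]
    simp [cuspExponent, single_apply, h₀', h₁']

theorem injOn_linearCombination_cuspExponent (hne : i₀ ≠ i₁) (hrs : r.Coprime s) :
    Set.InjOn (linearCombination ℕ (cuspExponent i₀ i₁ r s)) {d | d i₀ < r} := by
  intro d hd d' hd' h
  obtain ⟨h₀, h₁⟩ := Nat.eq_and_eq_of_mul_add_mul_eq hrs hd hd' <| by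
    simpa only [linearCombination_cuspExponent_apply_left hne] using DFunLike.congr_fun h i₀
  ext i
  by_cases hi₀ : i = i₀; · rwa [hi₀]
  by_cases hi₁ : i = i₁; · rwa [hi₁]
  simpa only [linearCombination_cuspExponent_apply_of_ne _ hi₀ hi₁] using DFunLike.congr_fun h i

theorem cuspExponent_ne_zero (hr : 0 < r) (hs : 0 < s) (i : σ) : cuspExponent i₀ i₁ r s i ≠ 0 := by
  unfold cuspExponent
  split_ifs <;> simp <;> omega

theorem finite_setOf_cuspExponent_eq (e : σ →₀ ℕ) : {i | cuspExponent i₀ i₁ r s i = e}.Finite := by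
  have hsub : {i | single i 1 = e}.Subsingleton := fun i hi j hj =>
    single_left_injective one_ne_zero (hi.trans hj.symm)
  refine ((Set.toFinite {i₀, i₁}).union hsub.finite).subset fun i hi => ?_
  by_cases h : i = i₀ ∨ i = i₁
  · exact Or.inl h
  · obtain ⟨h₀, h₁⟩ := not_or.1 h
    exact Or.inr (by simpa [cuspExponent, h₀, h₁] using hi)

theorem hasSubst_cuspParam (hr : 0 < r) (hs : 0 < s) : HasSubst (cuspParam R i₀ i₁ r s) :=
  hasSubst_monomial_one (cuspExponent_ne_zero hr hs) finite_setOf_cuspExponent_eq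

theorem coeff_subst_cuspParam (hr : 0 < r) (hs : 0 < s) (f : MvPowerSeries σ R) (e : σ →₀ ℕ) :
    coeff e (subst (cuspParam R i₀ i₁ r s) f) =
      ∑ᶠ (d) (_ : linearCombination ℕ (cuspExponent i₀ i₁ r s) d = e), coeff d f :=
  coeff_subst_monomial_one (hasSubst_cuspParam hr hs) f e

variable (hne : i₀ ≠ i₁) (hr : 0 < r) (hs : 0 < s)
include hne hr hs

theorem subst_cuspParam_X_pow_sub_X_pow :
    subst (cuspParam R i₀ i₁ r s) (X i₀ ^ r - X i₁ ^ s : MvPowerSeries σ R) = 0 := by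
  have ha := hasSubst_cuspParam (R := R) (i₀ := i₀) (i₁ := i₁) hr hs
  rw [subst_sub ha, subst_pow ha, subst_pow ha, subst_X ha, subst_X ha]
  simp [cuspParam, monomial_pow, cuspExponent, hne.symm, smul_single, mul_comm]

theorem eq_zero_of_subst_cuspParam_eq_zero (hrs : r.Coprime s) {g : MvPowerSeries σ R}
    (hg : ∀ d, r ≤ d i₀ → coeff d g = 0) (h : subst (cuspParam R i₀ i₁ r s) g = 0) : g = 0 := by
  ext d
  by_cases hd : r ≤ d i₀
  · exact hg d hd
  have hcoeff := congrArg (coeff (linearCombination ℕ (cuspExponent i₀ i₁ r s) d)) h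
  rw [coeff_subst_cuspParam hr hs, map_zero, finsum_eq_single _ d] at hcoeff
  · simpa using hcoeff
  · intro d' hd'
    by_cases h' : r ≤ d' i₀
    · simp [hg d' h']
    have hne' : linearCombination ℕ (cuspExponent i₀ i₁ r s) d' ≠
        linearCombination ℕ (cuspExponent i₀ i₁ r s) d := fun heq =>
      hd' (injOn_linearCombination_cuspExponent hne hrs (by simpa using h') (by simpa using hd) heq)
    simp [hne']

theorem ker_substAlgHom_cuspParam (hrs : r.Coprime s) :
    RingHom.ker (substAlgHom (hasSubst_cuspParam (R := R) (i₀ := i₀) (i₁ := i₁) hr hs)) =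
      Ideal.span {(X i₀ ^ r - X i₁ ^ s : MvPowerSeries σ R)} := by
  refine le_antisymm (fun f hf => ?_) ?_
  · obtain ⟨q, hq⟩ := exists_coeff_sub_X_pow_sub_X_pow_mul_eq_zero hne r hs f
    have hrem := eq_zero_of_subst_cuspParam_eq_zero hne hr hs hrs hq <| by
      rw [RingHom.mem_ker, substAlgHom_apply] at hf
      rw [subst_sub (hasSubst_cuspParam hr hs), subst_mul (hasSubst_cuspParam hr hs), hf,
        subst_cuspParam_X_pow_sub_X_pow hne hr hs, zero_mul, sub_zero]
    exact Ideal.mem_span_singleton'.2 ⟨q, by rw [mul_comm]; exact (sub_eq_zero.1 hrem).symm⟩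
  · rw [Ideal.span_le, Set.singleton_subset_iff, SetLike.mem_coe, RingHom.mem_ker,
      substAlgHom_apply]
    exact subst_cuspParam_X_pow_sub_X_pow hne hr hs

end Cusp

theorem isPrime_span_X_pow_sub_X_pow [IsDomain R] {i₀ i₁ : σ} (hne : i₀ ≠ i₁) {r s : ℕ}
    (hr : 0 < r) (hs : 0 < s) (hrs : r.Coprime s) :
    (Ideal.span {(X i₀ ^ r - X i₁ ^ s : MvPowerSeries σ R)}).IsPrime := by
  classical
  have := NoZeroDivisors.to_isDomain (MvPowerSeries σ R)
  rw [← ker_substAlgHom_cuspParam hne hr hs hrs]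
  exact RingHom.ker_isPrime _

end MvPowerSeries

/-- For a field `k` and `n ≥ 3`, if `gcd(r,s) = 1` with `r, s > 0`, then
the ideal generated by `x₁^r - x₂^s` in `k[[x₁,…,xₙ]]` is prime. -/
theorem stmt2 (k : Type*) [Field k] (n : ℕ) (hn : 3 ≤ n) (r s : ℕ)
    (hr : 0 < r) (hs : 0 < s) (hrs : Nat.gcd r s = 1) :
    (Ideal.span {(MvPowerSeries.X ⟨0, by omega⟩ : MvPowerSeries (Fin n) k) ^ r -
        MvPowerSeries.X ⟨1, by omega⟩ ^ s}).IsPrime :=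
  MvPowerSeries.isPrime_span_X_pow_sub_X_pow (by simp) hr hs hrs
end

section
/- Let k be a field and let r, s be coprime positive integers. Then the polynomial x^r - y^s is irreducible in k[x,y]. -/
open MvPolynomial

set_option synthInstance.maxHeartbeats 1000000 in

lemma aux3 (k : Type*) [Field k] (r s : ℕ) (hr : Odd r) (hs : 0 < s)
    (hrs : Nat.Coprime r s) :
    Irreducible ((X 0 : MvPolynomial (Fin 2) k) ^ r - X 1 ^ s) := by
  have hr0 : r ≠ 0 := by rintro rfl; simp [Nat.odd_iff] at hr
  rw [← MulEquiv.irreducible_iff (finSuccEquiv k 1)]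
  have h1 : (1 : Fin 2) = Fin.succ 0 := rfl
  rw [map_sub, map_pow, map_pow, finSuccEquiv_X_zero, h1, finSuccEquiv_X_succ,
    ← Polynomial.C_pow]
  set R := MvPolynomial (Fin 1) k
  set a : R := (X 0) ^ s with ha
  set K := FractionRing R
  rw [Polynomial.Monic.irreducible_iff_irreducible_map_fraction_map (K := K)
    (Polynomial.monic_X_pow_sub_C a hr0), Polynomial.map_sub, Polynomial.map_pow,
    Polynomial.map_X, Polynomial.map_C]
  apply X_pow_sub_C_irreducible_of_odd hr
  intro p hp hpr b hb
  have hint : IsIntegral R b :=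
    ⟨Polynomial.X ^ p - Polynomial.C a, Polynomial.monic_X_pow_sub_C a hp.ne_zero,
      by simp [hb, sub_eq_zero]⟩
  obtain ⟨c, rfl⟩ := IsIntegrallyClosed.isIntegral_iff.mp hint
  have hc : c ^ p = a := by
    apply IsFractionRing.injective R K
    rw [map_pow, hb]
  have hc2 : (finSuccEquiv k 0 c) ^ p = Polynomial.X ^ s := by
    rw [← map_pow, hc, ha, map_pow, finSuccEquiv_X_zero]
  have hdeg : p * (finSuccEquiv k 0 c).natDegree = s := by
    have := congrArg Polynomial.natDegree hc2
    rwa [Polynomial.natDegree_pow, Polynomial.natDegree_X_pow] at this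
  have : p ∣ Nat.gcd r s := Nat.dvd_gcd hpr ⟨_, hdeg.symm⟩
  rw [hrs] at this
  exact hp.ne_one (Nat.dvd_one.mp this)

/-- For a field `k` and coprime positive integers `r, s`,
the polynomial `x^r - y^s` is irreducible in `k[x,y]`. -/
theorem stmt3 (k : Type*) [Field k] (r s : ℕ) (hr : 0 < r) (hs : 0 < s)
    (hrs : Nat.Coprime r s) :
    Irreducible ((X 0 : MvPolynomial (Fin 2) k) ^ r - X 1 ^ s) := by
  rcases Nat.even_or_odd r with he | ho
  · have hso : Odd s := by
      rcases Nat.even_or_odd s with hse | hso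
      · exfalso
        have h2 : (2 : ℕ) ∣ Nat.gcd r s := Nat.dvd_gcd he.two_dvd hse.two_dvd
        rw [hrs] at h2
        norm_num at h2
      · exact hso
    have h := aux3 k s r hso hr hrs.symm
    have h2 := (MulEquiv.irreducible_iff (renameEquiv k (Equiv.swap (0 : Fin 2) 1))).mpr h
    rw [map_sub, map_pow, map_pow, renameEquiv_apply, renameEquiv_apply, rename_X, rename_X,
      Equiv.swap_apply_left, Equiv.swap_apply_right] at h2
    have hassoc : Associated ((X 1 : MvPolynomial (Fin 2) k) ^ s - X 0 ^ r)
        (X 0 ^ r - X 1 ^ s) :=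
      ⟨-1, by rw [Units.val_neg, Units.val_one, mul_neg_one, neg_sub]⟩
    exact hassoc.irreducible h2
  · exact aux3 k r s ho hs hrs
end

section
/- Let (R,m) be a Noetherian local ring, and let p_1, p_2 be ideals of R. Then there exists a positive integer c such that for all N ≥ c, (p_1 + m^N) ∩ (p_2 + m^N) ⊆ (p_1 ∩ p_2) + m^{N-c}. -/
/-- In a Noetherian local ring `(R,m)`, for ideals `p₁, p₂` there is a
`c > 0` such that `(p₁ + m^N) ∩ (p₂ + m^N) ⊆ (p₁ ∩ p₂) + m^(N-c)` for all `N ≥ c`. -/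
theorem stmt5 (R : Type*) [CommRing R] [IsNoetherianRing R] [IsLocalRing R]
    (p₁ p₂ : Ideal R) :
    ∃ c : ℕ, 0 < c ∧ ∀ N : ℕ, c ≤ N →
      (p₁ + IsLocalRing.maximalIdeal R ^ N) ⊓ (p₂ + IsLocalRing.maximalIdeal R ^ N) ≤
        (p₁ ⊓ p₂) + IsLocalRing.maximalIdeal R ^ (N - c) := by
  set m := IsLocalRing.maximalIdeal R
  obtain ⟨k, hk⟩ := Ideal.exists_pow_inf_eq_pow_smul m (M := R) (p₁ ⊔ p₂)
  refine ⟨k + 1, Nat.succ_pos _, fun N hN x hx => ?_⟩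
  obtain ⟨hx1, hx2⟩ := hx
  obtain ⟨a₁, ha₁, u, hu, hxa₁⟩ := Submodule.mem_sup.mp hx1
  obtain ⟨a₂, ha₂, v, hv, hxa₂⟩ := Submodule.mem_sup.mp hx2
  have hd : a₁ - a₂ ∈ m ^ (N - k) • ((p₁ ⊔ p₂) : Ideal R) := by
    have h1 : a₁ - a₂ ∈ (m ^ N • ⊤ : Ideal R) ⊓ (p₁ ⊔ p₂) := by
      constructor
      · have htop : (m ^ N • ⊤ : Ideal R) = m ^ N := by rw [smul_eq_mul, Ideal.mul_top]
        have : a₁ - a₂ = v - u := by linear_combination hxa₁ - hxa₂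
        rw [htop]
        exact this ▸ sub_mem hv hu
      · exact sub_mem (le_sup_left (a := p₁) ha₁) (le_sup_right (b := p₂) ha₂)
    rw [hk N (le_trans (Nat.le_succ k) hN)] at h1
    exact Submodule.smul_mono le_rfl inf_le_right h1
  rw [Submodule.smul_sup] at hd
  obtain ⟨b₁, hb₁, b₂, hb₂, hb⟩ := Submodule.mem_sup.mp hd
  have hb₁p : b₁ ∈ p₁ := Submodule.smul_le.mpr (fun r _ x hx => Ideal.mul_mem_left _ r hx) hb₁
  have hb₂p : b₂ ∈ p₂ := Submodule.smul_le.mpr (fun r _ x hx => Ideal.mul_mem_left _ r hx) hb₂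
  have hb₁m : b₁ ∈ m ^ (N - (k + 1)) :=
    Ideal.pow_le_pow_right (Nat.sub_le_sub_left (Nat.le_succ k) N)
      (Submodule.smul_le.mpr (fun r hr x _ => Ideal.mul_mem_right _ _ hr) hb₁)
  refine Submodule.mem_sup.mpr ⟨a₁ - b₁, ⟨sub_mem ha₁ hb₁p, ?_⟩, b₁ + u, ?_, by linear_combination hxa₁⟩
  · have : a₁ - b₁ = a₂ + b₂ := by linear_combination -hb
    exact this ▸ add_mem ha₂ hb₂p
  · exact add_mem hb₁m (Ideal.pow_le_pow_right (Nat.sub_le N (k + 1)) hu)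
end

section
/- Let R be a Noetherian local ring, Q a prime ideal of R, and p an ideal contained in Q that is primary. Then the intersection over all positive integers m of the ideals (p + Q^m) : (R \ Q) equals p, where (p + Q^m) : (R \ Q) = {r ∈ R : rs ∈ p + Q^m for some s ∉ Q}. -/
/-- Let `R` be Noetherian local, `Q` a prime ideal, `p ⊆ Q` a primary
ideal. Then `⋂ₘ ((p + Q^m) : (R \ Q)) = p`, where
`(p + Q^m) : (R \ Q) = {r : ∃ s ∉ Q, r·s ∈ p + Q^m}`. -/
theorem stmt7 (R : Type*) [CommRing R] [IsNoetherianRing R] [IsLocalRing R]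
    (Q : Ideal R) (hQ : Q.IsPrime) (p : Ideal R) (hp : p.IsPrimary) (hpQ : p ≤ Q) :
    ∀ r : R, (∀ m : ℕ, 0 < m → ∃ s ∉ Q, r * s ∈ p + Q ^ m) ↔ r ∈ p := by
  intro r
  constructor
  · intro h
    classical
    haveI := hQ
    set L := Localization.AtPrime Q with hL
    set f : R →+* L := algebraMap R L with hf
    haveI : IsNoetherianRing L := IsLocalization.isNoetherianRing Q.primeCompl L ‹_›
    set MQ : Ideal L := Q.map f with hMdef
    have hMmax : MQ = IsLocalRing.maximalIdeal L := Localization.AtPrime.map_eq_maximalIdeal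
    have hMne : MQ ≠ ⊤ := hMmax ▸ (IsLocalRing.maximalIdeal.isMaximal L).ne_top
    set J : Ideal L := p.map f with hJdef
    -- Step 1: f r ∈ J + M^m for all m
    have key : ∀ m : ℕ, f r ∈ J + MQ ^ m := by
      intro m
      rcases Nat.eq_zero_or_pos m with rfl | hm
      · rw [pow_zero, Ideal.add_eq_sup, Ideal.one_eq_top]
        exact Submodule.mem_sup_right Submodule.mem_top
      obtain ⟨s, hs, hrs⟩ := h m hm
      have h1 : f (r * s) ∈ (p + Q ^ m).map f := Ideal.mem_map_of_mem f hrs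
      have h2 : (p + Q ^ m).map f = J + MQ ^ m := by
        rw [Ideal.add_eq_sup, Ideal.map_sup, Ideal.map_pow, Ideal.add_eq_sup]
      rw [h2] at h1
      have hu : IsUnit (f s) := IsLocalization.map_units L (⟨s, hs⟩ : Q.primeCompl)
      obtain ⟨u, hu⟩ := hu
      have heq : f r = f (r * s) * ↑u⁻¹ := by
        rw [map_mul, ← hu, mul_assoc, Units.mul_inv, mul_one]
      rw [heq]
      exact Ideal.mul_mem_right _ _ h1
    -- Step 2: Krull's intersection theorem in L ⧸ J
    have hJ : f r ∈ J := by
      have hbot : (⨅ i : ℕ, MQ ^ i • (⊤ : Submodule L (L ⧸ J))) = ⊥ :=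
        Ideal.iInf_pow_smul_eq_bot_of_isLocalRing (M := L ⧸ J) MQ hMne
      have hmem : Ideal.Quotient.mk J (f r) ∈
          (⨅ i : ℕ, MQ ^ i • (⊤ : Submodule L (L ⧸ J))) := by
        rw [Submodule.mem_iInf]
        intro i
        obtain ⟨a, ha, b, hb, hab⟩ := Submodule.mem_sup.mp (key i)
        have heq : Ideal.Quotient.mk J (f r) = b • Ideal.Quotient.mk J 1 := by
          rw [← hab, map_add, Ideal.Quotient.eq_zero_iff_mem.mpr ha, zero_add]
          show Ideal.Quotient.mk J b = Ideal.Quotient.mk J (b * 1)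
          rw [mul_one]
        rw [heq]
        exact Submodule.smul_mem_smul hb Submodule.mem_top
      rw [hbot, Submodule.mem_bot] at hmem
      exact Ideal.Quotient.eq_zero_iff_mem.mp hmem
    -- Step 3: contract back to R using that p is primary
    obtain ⟨⟨a, s⟩, hsum⟩ := (IsLocalization.mem_map_algebraMap_iff Q.primeCompl L).mp hJ
    have heq : f (r * ↑s) = f ↑a := by
      rw [map_mul]; exact hsum
    obtain ⟨c, hc⟩ := (IsLocalization.eq_iff_exists Q.primeCompl L).mp heq
    have hmem : r * (↑s * ↑c) ∈ p := by
      have : (↑c : R) * (r * ↑s) ∈ p := by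
        rw [hc]; exact Ideal.mul_mem_left _ _ a.2
      have hre : r * (↑s * ↑c) = ↑c * (r * ↑s) := by ring
      rwa [hre]
    have hscQ : (↑s * ↑c : R) ∉ Q := (Q.primeCompl.mul_mem s.2 c.2 : _)
    rcases (Ideal.isPrimary_iff.mp hp).2 hmem with hr' | hrad
    · exact hr'
    · exact absurd ((Ideal.radical_mono hpQ).trans (le_of_eq hQ.radical) hrad) hscQ
  · intro hr m hm
    refine ⟨1, fun h1 => hQ.ne_top ((Ideal.eq_top_iff_one Q).mpr h1), ?_⟩
    rw [mul_one, Ideal.add_eq_sup]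
    exact Submodule.mem_sup_left hr
end

section
/- Let (R,m) be a Noetherian local ring and P a prime ideal of R generated by a regular sequence. Then P^(2) ⊆ m·P, where P^(2) is the second symbolic power of P. -/
/-!
Write `P = (r₁, …, rₙ)` with `r` weakly regular. Every relation `∑ cᵢ rᵢ = 0` has all
`cᵢ ∈ P` (the Koszul complex is exact in degree one), so `P/P²` is free over `R/P` on
the `rᵢ`. Hence if `x = ∑ aᵢ rᵢ` and `x s ∈ P²` with `s ∉ P`, every `aᵢ s` lies in `P`,
so every `aᵢ` does since `P` is prime. Thus `P⁽²⁾ = P² ⊆ m P`.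
-/

open RingTheory.Sequence

section

variable {R M : Type*} [CommRing R] [AddCommGroup M] [Module R M]

theorem Ideal.ofList_ofFn {n : ℕ} (r : Fin n → R) :
    Ideal.ofList (List.ofFn r) = Ideal.span (Set.range r) := by
  simp only [Ideal.ofList, List.mem_ofFn]
  rfl

theorem Submodule.mem_span_range_smul_iff {ι : Type*} [Fintype ι] (r : ι → R)
    (N : Submodule R M) (x : M) :
    x ∈ Ideal.span (Set.range r) • N ↔
      ∃ m : ι → M, (∀ i, m i ∈ N) ∧ ∑ i, r i • m i = x := by
  constructor
  · intro hx
    refine Submodule.smul_induction_on hx (fun a ha n hn => ?_) ?_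
    · obtain ⟨c, rfl⟩ := Ideal.mem_span_range_iff_exists_fun.mp ha
      refine ⟨fun i => c i • n, fun i => N.smul_mem _ hn, ?_⟩
      simp only [Finset.sum_smul, smul_smul, mul_comm]
    · rintro _ _ ⟨m, hm, rfl⟩ ⟨m', hm', rfl⟩
      exact ⟨m + m', fun i => N.add_mem (hm i) (hm' i), by
        simp only [Pi.add_apply, smul_add, Finset.sum_add_distrib]⟩
  · rintro ⟨m, hm, rfl⟩
    exact Submodule.sum_mem _ fun i _ =>
      Submodule.smul_mem_smul (Ideal.subset_span ⟨i, rfl⟩) (hm i)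

namespace RingTheory.Sequence.IsWeaklyRegular

/-- Exactness of the Koszul complex in degree one. -/
theorem mem_smul_top_of_sum_smul_eq_zero {n : ℕ} {r : Fin n → R}
    (hr : IsWeaklyRegular M (List.ofFn r)) {m : Fin n → M} (hm : ∑ i, r i • m i = 0)
    (i : Fin n) : m i ∈ Ideal.span (Set.range r) • (⊤ : Submodule R M) := by
  induction n with
  | zero => exact i.elim0
  | succ n ih =>
    rw [List.ofFn_succ', List.concat_eq_append, isWeaklyRegular_append_iff,
      isWeaklyRegular_singleton_iff, Ideal.ofList_ofFn] at hr
    obtain ⟨hinit, hlast⟩ := hr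
    set J := Ideal.span (Set.range fun j : Fin n => r j.castSucc)
    have hJ : J ≤ Ideal.span (Set.range r) :=
      Ideal.span_mono (Set.range_comp_subset_range Fin.castSucc r)
    rw [Fin.sum_univ_castSucc] at hm
    -- the last generator is regular modulo `J`
    have hmlast : m (Fin.last n) ∈ J • (⊤ : Submodule R M) := by
      refine mem_of_isSMulRegular_quotient_of_smul_mem hlast ?_
      rw [eq_neg_of_add_eq_zero_right hm]
      exact neg_mem ((Submodule.mem_span_range_smul_iff _ _ _).mpr ⟨_, fun _ => trivial, rfl⟩)
    obtain ⟨k, -, hk⟩ := (Submodule.mem_span_range_smul_iff _ _ _).mp hmlast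
    have hrel : ∑ j : Fin n, r j.castSucc • (m j.castSucc + r (Fin.last n) • k j) = 0 := by
      simp only [smul_add, Finset.sum_add_distrib, smul_comm (r _) (r (Fin.last n)),
        ← Finset.smul_sum, hk, hm]
    refine Fin.lastCases (Submodule.smul_mono_left hJ hmlast) (fun j => ?_) i
    have hrk : r (Fin.last n) • k j ∈ Ideal.span (Set.range r) • (⊤ : Submodule R M) :=
      Submodule.smul_mem_smul (Ideal.subset_span ⟨_, rfl⟩) trivial
    simpa using sub_mem (Submodule.smul_mono_left hJ (ih hinit hrel j)) hrk

/-- `I / I²` is free over `R / I` on the generators `rᵢ` (quasi-regularity). -/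
theorem mem_smul_top_of_sum_smul_mem {n : ℕ} {r : Fin n → R}
    (hr : IsWeaklyRegular M (List.ofFn r)) {m : Fin n → M}
    (hm : ∑ i, r i • m i ∈
      Ideal.span (Set.range r) • Ideal.span (Set.range r) • (⊤ : Submodule R M))
    (i : Fin n) : m i ∈ Ideal.span (Set.range r) • (⊤ : Submodule R M) := by
  obtain ⟨k, hk, hsum⟩ := (Submodule.mem_span_range_smul_iff _ _ _).mp hm
  have hrel : ∑ i, r i • (m - k) i = 0 := by
    simp only [Pi.sub_apply, smul_sub, Finset.sum_sub_distrib, hsum, sub_self]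
  simpa using add_mem (mem_smul_top_of_sum_smul_eq_zero hr hrel i) (hk i)

end RingTheory.Sequence.IsWeaklyRegular

theorem Ideal.IsPrime.mem_sq_of_mul_mem_sq {P : Ideal R} (hP : P.IsPrime) {n : ℕ}
    {r : Fin n → R} (hr : IsWeaklyRegular R (List.ofFn r)) (hPr : P = Ideal.span (Set.range r))
    {x s : R} (hs : s ∉ P) (hxs : x * s ∈ P ^ 2) : x ∈ P ^ 2 := by
  have hxP : x ∈ P := (hP.mem_or_mem (Ideal.pow_le_self two_ne_zero hxs)).resolve_right hs
  subst hPr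
  obtain ⟨a, -, rfl⟩ := (Submodule.mem_span_range_smul_iff r ⊤ x).mp (by simpa using hxP)
  have haP : ∀ i, a i ∈ Ideal.span (Set.range r) := fun i => by
    refine (hP.mem_or_mem ?_).resolve_right hs
    have hsum : ∑ i, r i • (a i * s) = (∑ i, r i • a i) * s := by
      simp only [Finset.sum_mul, smul_eq_mul, mul_assoc]
    simpa using hr.mem_smul_top_of_sum_smul_mem (m := fun i => a i * s)
      (by rw [hsum]; simpa [sq] using hxs) i
  rw [sq, ← Ideal.smul_eq_mul]
  exact (Submodule.mem_span_range_smul_iff r _ _).mpr ⟨a, haP, rfl⟩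

end

theorem stmt19_general (R : Type*) [CommRing R] [IsLocalRing R]
    (P : Ideal R) (hP : P.IsPrime)
    (L : List R) (hreg : RingTheory.Sequence.IsRegular R L) (hgen : P = Ideal.span {x | x ∈ L}) :
    ∀ x : R, (∃ s ∉ P, x * s ∈ P ^ 2) → x ∈ IsLocalRing.maximalIdeal R * P := by
  rintro x ⟨s, hs, hxs⟩
  have hL : IsWeaklyRegular R (List.ofFn L.get) := by
    rw [List.ofFn_get]
    exact hreg.toIsWeaklyRegular
  have hPL : P = Ideal.span (Set.range L.get) := by
    rw [← Ideal.ofList_ofFn, List.ofFn_get, hgen]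
  have hx : x ∈ P * P := sq P ▸ hP.mem_sq_of_mul_mem_sq hL hPL hs hxs
  exact Ideal.mul_mono_left (IsLocalRing.le_maximalIdeal hP.ne_top) hx

/-- In a Noetherian local ring `(R,m)`, if the prime ideal `P` is
generated by a regular sequence then `P⁽²⁾ ⊆ m·P`. -/
theorem stmt19 (R : Type*) [CommRing R] [IsNoetherianRing R] [IsLocalRing R]
    (P : Ideal R) (hP : P.IsPrime)
    (L : List R) (hreg : RingTheory.Sequence.IsRegular R L) (hgen : P = Ideal.span {x | x ∈ L}) :
    ∀ x : R, (∃ s ∉ P, x * s ∈ P ^ 2) → x ∈ IsLocalRing.maximalIdeal R * P :=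
  stmt19_general R P hP L hreg hgen
end
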